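/- Let p be a prime, α, β ∈ Q_p with v_p(α) ≤ −1, let a = ⌊α⌋_p (so v_p(a) = v_p(α)), and let x, y, z, t ∈ Q_p be nonzero. Assume v_p(xβ) < v_p(y), v_p(zβ) < v_p(t), and v_p(xα + z) = min{v_p(xα), v_p(z)}. Define x′ = xa + z, y′ = ya + t, z′ = x, t′ = y (the coefficients obtained after an α-input transformation of the bilinear fractional transformation). Then v_p(x′β) < v_p(y′), v_p(z′β) < v_p(t′), and v_p(x′α) < v_p(z′). -/

import Mathlib

open scoped Classical

/-- The `p`-adic valuation on `ℚ_[p]`, with `vp p 0 = ⊤` (i.e. `v_p(0) = +∞`). -/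
noncomputable def vp (p : ℕ) [Fact p.Prime] (x : ℚ_[p]) : WithTop ℤ :=
  if x = 0 then ⊤ else (x.valuation : WithTop ℤ)

/-- `a ∈ ℤ[1/p]`, i.e. `a` is a rational whose denominator is a power of `p`. -/
def InZinvp (p : ℕ) (a : ℚ) : Prop := ∃ n : ℕ, ∃ m : ℤ, a * (p : ℚ) ^ n = m

/-- `a` is the Ruban floor of `α`: `a ∈ ℤ[1/p] ∩ [0, p)` and `v_p(α - a) ≥ 1`. -/
def IsRubanFloor (p : ℕ) [Fact p.Prime] (α : ℚ_[p]) (a : ℚ) : Prop :=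
  InZinvp p a ∧ 0 ≤ a ∧ a < p ∧ 1 ≤ vp p (α - (a : ℚ_[p]))

/-- The Ruban floor `⌊α⌋_p` of a `p`-adic number (it exists and is unique). -/
noncomputable def rubanFloor (p : ℕ) [Fact p.Prime] (α : ℚ_[p]) : ℚ :=
  if h : ∃ a : ℚ, IsRubanFloor p α a then h.choose else 0

section helpers

variable {p : ℕ} [Fact p.Prime]

lemma vp_eq_top_iff {x : ℚ_[p]} : vp p x = ⊤ ↔ x = 0 := by
  unfold vp; split_ifs with h <;> simp [h]

lemma vp_ne_top {x : ℚ_[p]} (hx : x ≠ 0) : vp p x ≠ ⊤ := by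
  simp [vp_eq_top_iff, hx]

lemma vp_mul (x y : ℚ_[p]) : vp p (x * y) = vp p x + vp p y := by
  by_cases hx : x = 0
  · simp [vp, hx]
  by_cases hy : y = 0
  · simp [vp, hy]
  simp only [vp, if_neg hx, if_neg hy, if_neg (mul_ne_zero hx hy),
    Padic.valuation_mul hx hy, WithTop.coe_add]

lemma vp_add_min (x y : ℚ_[p]) : min (vp p x) (vp p y) ≤ vp p (x + y) := by
  by_cases hxy : x + y = 0
  · simp [vp, hxy]
  by_cases hx : x = 0
  · simp [vp, hx, hxy]
  by_cases hy : y = 0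
  · simp [vp, hy, hxy]
  simp only [vp, if_neg hx, if_neg hy, if_neg hxy, ← WithTop.coe_min, WithTop.coe_le_coe]
  exact Padic.le_valuation_add hxy

lemma vp_neg (x : ℚ_[p]) : vp p (-x) = vp p x := by
  by_cases hx : x = 0
  · simp [hx]
  have h1 : vp p (-1 : ℚ_[p]) = 0 := by
    have := vp_mul (-1 : ℚ_[p]) (-1)
    simp only [neg_mul, one_mul, neg_neg] at this
    have h1' : vp p (1 : ℚ_[p]) = 0 := by simp [vp, Padic.valuation_one]
    rw [h1'] at this
    have hne : vp p (-1 : ℚ_[p]) ≠ ⊤ := vp_ne_top (by norm_num)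
    obtain ⟨k, hk⟩ := WithTop.ne_top_iff_exists.mp hne
    rw [← hk] at this ⊢
    have : k + k = 0 := by exact_mod_cast this.symm
    have : k = 0 := by omega
    simp [this]
  calc vp p (-x) = vp p ((-1) * x) := by ring_nf
    _ = vp p (-1 : ℚ_[p]) + vp p x := vp_mul _ _
    _ = vp p x := by rw [h1, zero_add]

/-- ultrametric: if `vp x < vp y` then `vp (x + y) = vp x`. -/
lemma vp_add_eq_left {x y : ℚ_[p]} (h : vp p x < vp p y) : vp p (x + y) = vp p x := by
  have hle : vp p x ≤ vp p (x + y) := by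
    have := vp_add_min x y
    rwa [min_eq_left h.le] at this
  have hge : vp p (x + y) ≤ vp p x := by
    have h2 := vp_add_min (x + y) (-y)
    simp only [add_neg_cancel_right, vp_neg] at h2
    rcases min_le_iff.mp h2 with h3 | h3
    · exact h3
    · exact absurd (h.trans_le h3) (lt_irrefl _)
  exact le_antisymm hge hle

lemma vp_p : vp p (p : ℚ_[p]) = 1 := by
  have hp : (p : ℚ_[p]) ≠ 0 := by
    exact_mod_cast (Nat.cast_ne_zero (R := ℚ_[p])).mpr (Fact.out (p := p.Prime)).ne_zero
  simp [vp, hp, Padic.valuation_p]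

lemma exists_isRubanFloor (p : ℕ) [Fact p.Prime] (α : ℚ_[p]) :
    ∃ a : ℚ, IsRubanFloor p α a := by
  have hp1 : 1 < p := (Fact.out (p := p.Prime)).one_lt
  by_cases hα : α = 0
  · refine ⟨0, ⟨0, 0, by simp⟩, le_refl _, by exact_mod_cast Nat.lt_of_lt_of_le Nat.zero_lt_one hp1.le, ?_⟩
    simp [hα, vp]
  · set n : ℕ := (-α.valuation).toNat with hn
    have hnval : (0 : ℤ) ≤ n + α.valuation := by
      have := Int.self_le_toNat (-α.valuation)
      omega
    have hpR : (1 : ℝ) < (p : ℝ) := by exact_mod_cast hp1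
    have hgnorm : ‖(p : ℚ_[p]) ^ n * α‖ ≤ 1 := by
      rw [norm_mul, Padic.norm_p_pow, Padic.norm_eq_zpow_neg_valuation hα,
        ← zpow_add₀ (by positivity : (p:ℝ) ≠ 0)]
      calc (p : ℝ) ^ (-(n:ℤ) + -α.valuation) ≤ (p : ℝ) ^ (0 : ℤ) := by
            apply zpow_le_zpow_right₀ hpR.le; omega
        _ = 1 := by norm_num
    set u : ℤ_[p] := ⟨(p : ℚ_[p]) ^ n * α, hgnorm⟩ with hu
    set k : ℕ := u.appr (n + 1) with hk
    have hklt : k < p ^ (n + 1) := u.appr_lt (n + 1)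
    obtain ⟨c, hc⟩ := Ideal.mem_span_singleton'.mp (u.appr_spec (n + 1))
    have hpQ : (0 : ℚ) < (p : ℚ) ^ n := by positivity
    refine ⟨(k : ℚ) / (p : ℚ) ^ n, ⟨n, k, by field_simp; norm_cast⟩, by positivity, ?_, ?_⟩
    · rw [div_lt_iff₀ hpQ]
      calc ((k : ℚ)) < ((p ^ (n + 1) : ℕ) : ℚ) := by exact_mod_cast hklt
        _ = (p : ℚ) * (p : ℚ) ^ n := by push_cast; ring
    · -- α - a = p * c in ℚ_[p]
      have hpne : (p : ℚ_[p]) ≠ 0 := by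
        exact_mod_cast (Nat.cast_ne_zero (R := ℚ_[p])).mpr (Fact.out (p := p.Prime)).ne_zero
      have hcast : ((((k : ℚ) / (p : ℚ) ^ n) : ℚ) : ℚ_[p]) = (k : ℚ_[p]) / (p : ℚ_[p]) ^ n := by
        push_cast; ring
      have hdiff : α - ((((k : ℚ) / (p : ℚ) ^ n) : ℚ) : ℚ_[p]) = (p : ℚ_[p]) * (c : ℚ_[p]) := by
        rw [hcast]
        have hc' : ((c : ℚ_[p]) * (p : ℚ_[p]) ^ (n + 1)) = (p : ℚ_[p]) ^ n * α - (k : ℚ_[p]) := by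
          have := congrArg (fun w : ℤ_[p] => (w : ℚ_[p])) hc
          push_cast at this
          simpa [hu] using this
        field_simp
        linear_combination -hc'
      rw [hdiff]
      by_cases hc0 : (c : ℚ_[p]) = 0
      · simp [hc0, vp]
      · rw [vp_mul, vp_p]
        have : (0 : WithTop ℤ) ≤ vp p (c : ℚ_[p]) := by
          simp only [vp, if_neg hc0]
          exact_mod_cast (PadicInt.valuation_coe_nonneg (x := c))
        calc (1 : WithTop ℤ) = 1 + 0 := by norm_num
          _ ≤ 1 + vp p (c : ℚ_[p]) := by exact add_le_add_right this 1

end helpers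

/-- with `v_p(α) ≤ -1`, `a = ⌊α⌋_p`, nonzero `x, y, z, t ∈ ℚ_p` such that
`v_p(xβ) < v_p(y)`, `v_p(zβ) < v_p(t)` and `v_p(xα + z) = min{v_p(xα), v_p(z)}`, the
coefficients `x' = xa + z`, `y' = ya + t`, `z' = x`, `t' = y` obtained after an
`α`-input transformation satisfy `v_p(x'β) < v_p(y')`, `v_p(z'β) < v_p(t')` and
`v_p(x'α) < v_p(z')`. -/
theorem stmt12 (p : ℕ) [Fact p.Prime] (α β : ℚ_[p])
    (hα : vp p α ≤ ((-1 : ℤ) : WithTop ℤ))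
    (a : ℚ) (ha : a = rubanFloor p α)
    (x y z t : ℚ_[p]) (hx : x ≠ 0) (hy : y ≠ 0) (hz : z ≠ 0) (ht : t ≠ 0)
    (h1 : vp p (x * β) < vp p y) (h2 : vp p (z * β) < vp p t)
    (h3 : vp p (x * α + z) = min (vp p (x * α)) (vp p z))
    (x' y' z' t' : ℚ_[p])
    (hx' : x' = x * (a : ℚ_[p]) + z) (hy' : y' = y * (a : ℚ_[p]) + t)
    (hz' : z' = x) (ht' : t' = y) :
    vp p (x' * β) < vp p y' ∧ vp p (z' * β) < vp p t' ∧ vp p (x' * α) < vp p z' := by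
  -- basic nonvanishing
  have hα0 : α ≠ 0 := by
    intro h; rw [h] at hα
    have h0 : vp p (0 : ℚ_[p]) = ⊤ := by simp [vp]
    rw [h0, top_le_iff] at hα
    exact WithTop.coe_ne_top hα
  have hβ0 : β ≠ 0 := by
    intro h; rw [h, mul_zero] at h1
    have h1' : (⊤ : WithTop ℤ) < vp p y := by simpa [vp] using h1
    exact not_top_lt h1'
  have hvxne : vp p x ≠ ⊤ := vp_ne_top hx
  have hvαne : vp p α ≠ ⊤ := vp_ne_top hα0
  -- the floor property
  have hfloor : IsRubanFloor p α a := by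
    have hex := exists_isRubanFloor p α
    rw [ha, rubanFloor, dif_pos hex]
    exact hex.choose_spec
  obtain ⟨-, -, -, hfa⟩ := hfloor
  have hm11 : ((-1 : ℤ) : WithTop ℤ) < (1 : WithTop ℤ) := by
    exact_mod_cast (by norm_num : (-1 : ℤ) < 1)
  have hαlt : vp p α < vp p (α - (a : ℚ_[p])) :=
    lt_of_le_of_lt hα (lt_of_lt_of_le hm11 hfa)
  have hva : vp p ((a : ℚ_[p])) = vp p α := by
    have h4 : vp p (α + -(α - (a : ℚ_[p]))) = vp p α :=
      vp_add_eq_left (by rwa [vp_neg])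
    have h5 : α + -(α - (a : ℚ_[p])) = (a : ℚ_[p]) := by ring
    rwa [h5] at h4
  -- valuation of x'
  have hx'v : vp p x' = min (vp p (x * α)) (vp p z) := by
    have hid : x' = (x * α + z) + -(x * (α - (a : ℚ_[p]))) := by rw [hx']; ring
    have hlt : vp p (x * α + z) < vp p (-(x * (α - (a : ℚ_[p])))) := by
      rw [vp_neg, vp_mul]
      calc vp p (x * α + z) ≤ min (vp p (x * α)) (vp p z) := le_of_eq h3
        _ ≤ vp p (x * α) := min_le_left _ _
        _ = vp p x + vp p α := vp_mul _ _
        _ < vp p x + vp p (α - (a : ℚ_[p])) := WithTop.add_lt_add_left hvxne hαlt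
    rw [hid, vp_add_eq_left hlt, h3]
  have hminadd : ∀ A B C : WithTop ℤ, min A B + C = min (A + C) (B + C) := by
    intro A B C
    rcases le_total A B with h | h
    · rw [min_eq_left h, min_eq_left (add_le_add_left h C)]
    · rw [min_eq_right h, min_eq_right (add_le_add_left h C)]
  refine ⟨?_, ?_, ?_⟩
  · -- vp (x'β) < vp y'
    have hA : vp p (x * α) + vp p β < vp p y + vp p α := by
      have e1 : vp p (x * α) + vp p β = vp p (x * β) + vp p α := by
        rw [vp_mul, vp_mul]; exact add_right_comm _ _ _
      rw [e1]
      exact WithTop.add_lt_add_right hvαne h1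
    have hB : vp p z + vp p β < vp p t := by
      rw [← vp_mul]; exact h2
    have hsum : vp p (x' * β) = min (vp p (x * α) + vp p β) (vp p z + vp p β) := by
      rw [vp_mul, hx'v, hminadd]
    have hy'min : min (vp p (y * (a : ℚ_[p]))) (vp p t) ≤ vp p y' := by
      rw [hy']; exact vp_add_min _ _
    have hya : vp p (y * (a : ℚ_[p])) = vp p y + vp p α := by rw [vp_mul, hva]
    rw [hsum]
    refine lt_of_lt_of_le (lt_min ?_ ?_) hy'min
    · rw [hya]; exact lt_of_le_of_lt (min_le_left _ _) hA
    · exact lt_of_le_of_lt (min_le_right _ _) hB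
  · rw [hz', ht']; exact h1
  · -- vp (x'α) < vp x
    rw [hz']
    obtain ⟨vx, hvx⟩ := WithTop.ne_top_iff_exists.mp hvxne
    calc vp p (x' * α) = min (vp p (x * α)) (vp p z) + vp p α := by rw [vp_mul, hx'v]
      _ ≤ vp p (x * α) + vp p α := add_le_add_left (min_le_left _ _) _
      _ = vp p x + vp p α + vp p α := by rw [vp_mul]
      _ ≤ (vx : WithTop ℤ) + ((-1 : ℤ) : WithTop ℤ) + ((-1 : ℤ) : WithTop ℤ) := by
          exact add_le_add (add_le_add (le_of_eq hvx.symm) hα) hα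
      _ = ((vx - 2 : ℤ) : WithTop ℤ) := by
          rw [← WithTop.coe_add, ← WithTop.coe_add]; congr 1; ring
      _ < (vx : WithTop ℤ) := by exact_mod_cast (by omega : vx - 2 < vx)
      _ = vp p x := hvx
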